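/- Static Conditional Limit Theorem for Sources: Let n0 ≥ 1 and ν ∈ R_{n0}. Let Q ⊆ P(X) be a nonempty convex closed set with ν ∉ Q, let q̂ ∈ Q be the unique maximizer of q ↦ L(q‖ν) over Q with L(q̂‖ν) > −∞, and assume the n-rational members of Q asymptotically realize the supremum, i.e., sup_{q ∈ Q∩R_{k·n0}} L(q‖ν) → L(Q‖ν) as k → ∞. Then for every ε > 0, the conditional posterior probability π_n(B(q̂,ε)∩Q|ν)/π_n(Q|ν) → 1 as k → ∞ along the subsequence n = k·n0. -/

import Mathlib

open scoped BigOperators Classical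
open Filter Topology

noncomputable section

def pmfSet (X : Type*) [Fintype X] : Set (X → ℝ) :=
  {p | (∀ x, 0 ≤ p x) ∧ ∑ x, p x = 1}

def Rn (X : Type*) [Fintype X] (n : ℕ) : Set (X → ℝ) :=
  {q | q ∈ pmfSet X ∧ ∀ x, ∃ k : ℕ, q x = (k : ℝ) / (n : ℝ)}

def ratPMF (X : Type*) [Fintype X] : Set (X → ℝ) :=
  {q | q ∈ pmfSet X ∧ ∀ x, ∃ r : ℚ, q x = (r : ℝ)}

def Ldiv {X : Type*} [Fintype X] (q p : X → ℝ) : EReal :=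
  ∑ x, if p x = 0 then (0 : EReal)
    else if q x = 0 then (⊥ : EReal)
    else (↑(p x * Real.log (q x)) : EReal)

def LSup {X : Type*} [Fintype X] (Q : Set (X → ℝ)) (p : X → ℝ) : EReal :=
  ⨆ q ∈ Q, Ldiv q p

def Idiv {X : Type*} [Fintype X] (p q : X → ℝ) : EReal :=
  ∑ x, if p x = 0 then (0 : EReal)
    else if q x = 0 then (⊤ : EReal)
    else (↑(p x * Real.log (p x / q x)) : EReal)

def typeProb {X : Type*} [Fintype X] (n : ℕ) (ν q : X → ℝ) : ℝ :=
  ∏ x, q x ^ ((n : ℝ) * ν x)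

def post {X : Type*} [Fintype X] (n : ℕ) (ν : X → ℝ) (Q : Set (X → ℝ)) : ℝ :=
  (∑' q : ↥(Q ∩ Rn X n), typeProb n ν ↑q) / (∑' q : ↥(Rn X n), typeProb n ν ↑q)

def postGen {X : Type*} [Fintype X] (w : (X → ℝ) → ℝ) (n : ℕ) (ν : X → ℝ)
    (Q : Set (X → ℝ)) : ℝ :=
  (∑' q : ↥(Q ∩ Rn X n), w ↑q * typeProb n ν ↑q) /
  (∑' q : ↥(Rn X n), w ↑q * typeProb n ν ↑q)

def tv {X : Type*} [Fintype X] (p q : X → ℝ) : ℝ := (1 / 2) * ∑ x, |p x - q x|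

def tvBall {X : Type*} [Fintype X] (q : X → ℝ) (ε : ℝ) : Set (X → ℝ) :=
  {p | p ∈ pmfSet X ∧ tv p q ≤ ε}

def elog (x : ℝ) : EReal := if x ≤ 0 then (⊥ : EReal) else (↑(Real.log x) : EReal)

def linFam {X : Type*} [Fintype X] {k : ℕ} (u : Fin k → X → ℝ) (a : Fin k → ℝ) :
    Set (X → ℝ) :=
  {q | q ∈ pmfSet X ∧ ∀ j, ∑ x, q x * u j x = a j}

def lambdaN {X : Type*} [Fintype X] (w : (X → ℝ) → ℝ) (n : ℕ) (ν : X → ℝ)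
    (C : Set (X → ℝ)) : EReal :=
  ⨆ q ∈ C ∩ {q | q ∈ Rn X n ∧ 0 < w q},
    (Ldiv q ν + (↑((1 : ℝ) / n * Real.log (w q)) : EReal))

def priorN {X : Type*} [Fintype X] (c : ℕ → (X → ℝ) → (X → ℝ)) (pr : (X → ℝ) → ℝ)
    (n : ℕ) (qn : X → ℝ) : ℝ :=
  ∑' q : ↥{q | q ∈ ratPMF X ∧ c n q = qn}, pr ↑q

section CoLTAux

variable {X : Type*} [Fintype X]

lemma pmf_le_one {q : X → ℝ} (hq : q ∈ pmfSet X) (x : X) : q x ≤ 1 := by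
  have h := Finset.single_le_sum (f := q) (fun y _ => hq.1 y) (Finset.mem_univ x)
  rw [hq.2] at h; exact h

lemma Rn_zero : Rn X 0 = (∅ : Set (X → ℝ)) := by
  ext q
  simp only [Set.mem_empty_iff_false, iff_false]
  rintro ⟨⟨_, hsum⟩, hrat⟩
  have hz : ∀ x, q x = 0 := fun x => by
    obtain ⟨k, hk⟩ := hrat x; simp [hk]
  rw [Finset.sum_congr rfl (fun x _ => hz x)] at hsum
  simp at hsum

lemma Rn_finite (n : ℕ) : (Rn X n).Finite := by
  rcases Nat.eq_zero_or_pos n with rfl | hn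
  · rw [Rn_zero]; exact Set.finite_empty
  · refine Set.Finite.subset
      (Set.Finite.pi (fun x : X => (Set.finite_Iic n).image (fun k : ℕ => (k : ℝ) / n))) ?_
    rintro q ⟨hq, hrat⟩
    rw [Set.mem_pi]
    intro x _
    obtain ⟨k, hk⟩ := hrat x
    refine ⟨k, ?_, hk.symm⟩
    have hnpos : (0 : ℝ) < n := by exact_mod_cast hn
    have h1 : (k : ℝ) / n ≤ 1 := hk ▸ pmf_le_one hq x
    rw [div_le_one hnpos] at h1
    exact Set.mem_Iic.mpr (by exact_mod_cast h1)

lemma Rn_card_le (n : ℕ) :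
    (Rn_finite (X := X) n).toFinset.card ≤ (n + 1) ^ Fintype.card X := by
  rcases Nat.eq_zero_or_pos n with rfl | hn
  · have : (Rn_finite (X := X) 0).toFinset = ∅ := by
      rw [Set.Finite.toFinset_eq_empty]; exact Rn_zero
    simp [this]
  have h1 : (Rn_finite (X := X) n).toFinset.card = Nat.card (Rn X n) := by
    rw [Nat.card_coe_set_eq, Set.ncard_eq_toFinset_card _ (Rn_finite n)]
  have hnpos : (0 : ℝ) < n := by exact_mod_cast hn
  have hkey : ∀ (q : ↥(Rn X n)) (x : X), Classical.choose (q.2.2 x) < n + 1 := by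
    rintro q x
    have hspec := Classical.choose_spec (q.2.2 x)
    have h1' : ((Classical.choose (q.2.2 x) : ℕ) : ℝ) / n ≤ 1 := hspec ▸ pmf_le_one q.2.1 x
    rw [div_le_one hnpos] at h1'
    have : Classical.choose (q.2.2 x) ≤ n := by exact_mod_cast h1'
    omega
  have hinj : Function.Injective (fun (q : ↥(Rn X n)) (x : X) =>
      (⟨Classical.choose (q.2.2 x), hkey q x⟩ : Fin (n + 1))) := by
    intro q q' h
    ext x
    have hx : Classical.choose (q.2.2 x) = Classical.choose (q'.2.2 x) := by
      have := congrFun h x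
      simpa using this
    have h1' := Classical.choose_spec (q.2.2 x)
    have h2' := Classical.choose_spec (q'.2.2 x)
    rw [h1', h2', hx]
  calc (Rn_finite (X := X) n).toFinset.card = Nat.card (Rn X n) := h1
    _ ≤ Nat.card (X → Fin (n + 1)) := Nat.card_le_card_of_injective _ hinj
    _ = (n + 1) ^ Fintype.card X := by
        rw [Nat.card_fun, Nat.card_eq_fintype_card, Nat.card_eq_fintype_card,
          Fintype.card_fin]

lemma ereal_coe_finset_sum {ι : Type*} (s : Finset ι) (f : ι → ℝ) :
    ((∑ i ∈ s, f i : ℝ) : EReal) = ∑ i ∈ s, (f i : EReal) :=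
  map_sum (⟨⟨Real.toEReal, EReal.coe_zero⟩, EReal.coe_add⟩ : ℝ →+ EReal) f s

lemma Ldiv_eq_coe {q ν : X → ℝ} (h : ∀ x, ν x ≠ 0 → q x ≠ 0) :
    Ldiv q ν = ((∑ x, ν x * Real.log (q x) : ℝ) : EReal) := by
  rw [Ldiv, ereal_coe_finset_sum]
  refine Finset.sum_congr rfl (fun x _ => ?_)
  by_cases hx : ν x = 0
  · simp [hx]
  · rw [if_neg hx, if_neg (h x hx)]

lemma Ldiv_term_nonpos {q ν : X → ℝ} (hq : q ∈ pmfSet X) (hν : ν ∈ pmfSet X) (x : X) :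
    (if ν x = 0 then (0 : EReal) else if q x = 0 then (⊥ : EReal)
      else (↑(ν x * Real.log (q x)) : EReal)) ≤ 0 := by
  by_cases hx : ν x = 0
  · simp [hx]
  by_cases hqx : q x = 0
  · simp [hx, hqx]
  · rw [if_neg hx, if_neg hqx]
    have h : ν x * Real.log (q x) ≤ 0 :=
      mul_nonpos_of_nonneg_of_nonpos (hν.1 x) (Real.log_nonpos (hq.1 x) (pmf_le_one hq x))
    exact_mod_cast h

lemma Ldiv_nonpos {q ν : X → ℝ} (hq : q ∈ pmfSet X) (hν : ν ∈ pmfSet X) : Ldiv q ν ≤ 0 :=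
  Finset.sum_nonpos (fun x _ => Ldiv_term_nonpos hq hν x)

lemma Ldiv_eq_bot {q ν : X → ℝ} (hq : q ∈ pmfSet X) (hν : ν ∈ pmfSet X)
    {x0 : X} (h1 : ν x0 ≠ 0) (h2 : q x0 = 0) : Ldiv q ν = ⊥ := by
  refine le_bot_iff.mp ?_
  calc Ldiv q ν ≤ ∑ x, (if x = x0 then (⊥ : EReal) else 0) := by
        refine Finset.sum_le_sum (fun x _ => ?_)
        by_cases hx : x = x0
        · subst hx; rw [if_pos rfl, if_neg h1, if_pos h2]
        · rw [if_neg hx]; exact Ldiv_term_nonpos hq hν x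
    _ = ⊥ := by
        rw [Finset.sum_ite_eq' Finset.univ x0 (fun _ => (⊥ : EReal))]
        simp

lemma typeProb_nonneg (n : ℕ) {ν q : X → ℝ} (hq : ∀ x, 0 ≤ q x) : 0 ≤ typeProb n ν q :=
  Finset.prod_nonneg fun x _ => Real.rpow_nonneg (hq x) _

lemma typeProb_eq_zero {n : ℕ} (hn : 1 ≤ n) {ν q : X → ℝ} {x0 : X}
    (hν : 0 < ν x0) (h2 : q x0 = 0) : typeProb n ν q = 0 := by
  apply Finset.prod_eq_zero (Finset.mem_univ x0)
  have hnpos : (0 : ℝ) < n := by exact_mod_cast hn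
  rw [h2, Real.zero_rpow (ne_of_gt (mul_pos hnpos hν))]

lemma typeProb_eq_exp (n : ℕ) {ν q : X → ℝ} (hq : ∀ x, 0 ≤ q x)
    (h : ∀ x, ν x ≠ 0 → q x ≠ 0) :
    typeProb n ν q = Real.exp ((n : ℝ) * ∑ x, ν x * Real.log (q x)) := by
  rw [typeProb, Finset.mul_sum, Real.exp_sum]
  refine Finset.prod_congr rfl (fun x _ => ?_)
  by_cases hx : ν x = 0
  · simp [hx]
  · have hqx : 0 < q x := (hq x).lt_of_ne (Ne.symm (h x hx))
    rw [Real.rpow_def_of_pos hqx]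
    ring_nf

lemma typeProb_le_exp {n : ℕ} (hn : 1 ≤ n) {ν q : X → ℝ} (hq : q ∈ pmfSet X)
    (hν : ν ∈ pmfSet X) {r : ℝ} (hL : Ldiv q ν ≤ (r : EReal)) :
    typeProb n ν q ≤ Real.exp ((n : ℝ) * r) := by
  by_cases hex : ∃ x, ν x ≠ 0 ∧ q x = 0
  · obtain ⟨x0, hx1, hx2⟩ := hex
    rw [typeProb_eq_zero hn ((hν.1 x0).lt_of_ne (Ne.symm hx1)) hx2]
    exact (Real.exp_pos _).le
  · push_neg at hex
    rw [typeProb_eq_exp n hq.1 hex]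
    apply Real.exp_le_exp.mpr
    have h2 : (∑ x, ν x * Real.log (q x)) ≤ r := by
      rw [Ldiv_eq_coe hex] at hL
      exact_mod_cast hL
    exact mul_le_mul_of_nonneg_left h2 (Nat.cast_nonneg n)

lemma exp_le_typeProb {n : ℕ} {ν q : X → ℝ} (hq : q ∈ pmfSet X) (hν : ν ∈ pmfSet X)
    {c : ℝ} (hL : (c : EReal) ≤ Ldiv q ν) :
    Real.exp ((n : ℝ) * c) ≤ typeProb n ν q := by
  have hex : ∀ x, ν x ≠ 0 → q x ≠ 0 := by
    intro x hx h0
    rw [Ldiv_eq_bot hq hν hx h0] at hL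
    exact absurd (le_bot_iff.mp hL) (EReal.coe_ne_bot c)
  rw [typeProb_eq_exp n hq.1 hex]
  apply Real.exp_le_exp.mpr
  have h2 : c ≤ ∑ x, ν x * Real.log (q x) := by
    rw [Ldiv_eq_coe hex] at hL
    exact_mod_cast hL
  exact mul_le_mul_of_nonneg_left h2 (Nat.cast_nonneg n)

lemma tsum_set_finite {s : Set (X → ℝ)} (hs : s.Finite) (f : (X → ℝ) → ℝ) :
    ∑' q : ↥s, f ↑q = ∑ q ∈ hs.toFinset, f q := by
  haveI := hs.fintype
  rw [tsum_fintype]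
  exact (Finset.sum_subtype hs.toFinset (fun x => hs.mem_toFinset) f).symm

lemma ereal_sum_ne_top {ι : Type*} (s : Finset ι) (g : ι → EReal)
    (h : ∀ i ∈ s, g i ≠ ⊤) : ∑ i ∈ s, g i ≠ ⊤ := by
  classical
  induction s using Finset.induction_on with
  | empty => simp
  | @insert a s ha ih =>
      rw [Finset.sum_insert ha]
      exact (EReal.add_lt_top (h a (Finset.mem_insert_self a s))
        (ih (fun i hi => h i (Finset.mem_insert_of_mem hi)))).ne

lemma continuousWithinAt_sum_ereal {α : Type*} [TopologicalSpace α] {ι : Type*}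
    (s : Finset ι) (g : ι → α → EReal) {t : Set α} {a : α}
    (hg : ∀ i ∈ s, ContinuousWithinAt (g i) t a)
    (hne : ∀ i ∈ s, g i a ≠ ⊤) :
    ContinuousWithinAt (fun b => ∑ i ∈ s, g i b) t a := by
  classical
  induction s using Finset.induction_on with
  | empty => simp only [Finset.sum_empty]; exact continuousWithinAt_const
  | @insert i s hi ih =>
      simp only [Finset.sum_insert hi]
      have h1 : ContinuousWithinAt (g i) t a := hg i (Finset.mem_insert_self i s)
      have h2 : ContinuousWithinAt (fun b => ∑ j ∈ s, g j b) t a :=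
        ih (fun j hj => hg j (Finset.mem_insert_of_mem hj))
          (fun j hj => hne j (Finset.mem_insert_of_mem hj))
      have hadd : ContinuousAt (fun p : EReal × EReal => p.1 + p.2)
          (g i a, ∑ j ∈ s, g j a) :=
        EReal.continuousAt_add (Or.inl (hne i (Finset.mem_insert_self i s)))
          (Or.inr (ereal_sum_ne_top s _ (fun j hj => hne j (Finset.mem_insert_of_mem hj))))
      exact Filter.Tendsto.comp hadd (ContinuousWithinAt.prodMk h1 h2)

lemma ldiv_term_continuous (ν : X → ℝ) (x : X) (hν : 0 ≤ ν x) {a : X → ℝ}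
    (ha : a ∈ {q : X → ℝ | ∀ y, 0 ≤ q y}) :
    ContinuousWithinAt
      (fun q : X → ℝ => if ν x = 0 then (0 : EReal) else if q x = 0 then (⊥ : EReal)
        else (↑(ν x * Real.log (q x)) : EReal))
      {q : X → ℝ | ∀ y, 0 ≤ q y} a := by
  by_cases hx : ν x = 0
  · simp only [if_pos hx]; exact continuousWithinAt_const
  have hνx : 0 < ν x := hν.lt_of_ne (Ne.symm hx)
  simp only [if_neg hx]
  rcases eq_or_lt_of_le (ha x) with h0 | hpos
  · have htend : Filter.Tendsto
        (fun q : X → ℝ => if q x = 0 then (⊥ : EReal) else (↑(ν x * Real.log (q x)) : EReal))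
        (nhdsWithin a {q : X → ℝ | ∀ y, 0 ≤ q y}) (nhds ⊥) := by
      rw [EReal.tendsto_nhds_bot_iff_real]
      intro r
      have hδ : (0 : ℝ) < Real.exp (r / ν x) := Real.exp_pos _
      have hmem : {q : X → ℝ | q x < Real.exp (r / ν x)} ∈
          nhdsWithin a {q : X → ℝ | ∀ y, 0 ≤ q y} := by
        apply mem_nhdsWithin_of_mem_nhds
        exact (isOpen_lt (continuous_apply x) continuous_const).mem_nhds
          (by simp only [Set.mem_setOf_eq, ← h0]; exact hδ)
      filter_upwards [hmem, self_mem_nhdsWithin] with q hq1 hq2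
      by_cases hq0 : q x = 0
      · rw [if_pos hq0]; exact bot_lt_iff_ne_bot.mpr (EReal.coe_ne_bot r)
      · rw [if_neg hq0]
        have hqpos : 0 < q x := (hq2 x).lt_of_ne (Ne.symm hq0)
        have hlog : Real.log (q x) < r / ν x := by
          have h := Real.log_lt_log hqpos hq1
          rwa [Real.log_exp] at h
        have hmul : ν x * Real.log (q x) < r := by
          have := (mul_lt_mul_iff_right₀ hνx).mpr hlog
          rwa [mul_div_cancel₀ r (ne_of_gt hνx)] at this
        exact_mod_cast hmul
    unfold ContinuousWithinAt
    convert htend using 2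
    beta_reduce
    rw [if_pos h0.symm]
  · have hcont : ContinuousWithinAt
        (fun q : X → ℝ => (↑(ν x * Real.log (q x)) : EReal))
        {q : X → ℝ | ∀ y, 0 ≤ q y} a := by
      have c1 : ContinuousAt (fun q : X → ℝ => Real.log (q x)) a :=
        ContinuousAt.comp (x := a) (f := fun q : X → ℝ => q x)
          (Real.continuousAt_log hpos.ne') (continuous_apply x).continuousAt
      have c2 : ContinuousAt (fun q : X → ℝ => ν x * Real.log (q x)) a :=
        continuousAt_const.mul c1
      exact ContinuousAt.continuousWithinAt
        (continuous_coe_real_ereal.continuousAt.comp c2)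
    apply hcont.congr_of_eventuallyEq
    · have hmem : {q : X → ℝ | 0 < q x} ∈ nhdsWithin a {q : X → ℝ | ∀ y, 0 ≤ q y} :=
        mem_nhdsWithin_of_mem_nhds
          ((isOpen_lt continuous_const (continuous_apply x)).mem_nhds hpos)
      filter_upwards [hmem] with q hq
      rw [if_neg (ne_of_gt hq)]
    · rw [if_neg (ne_of_gt hpos)]

lemma ldiv_continuousOn (ν : X → ℝ) (hν : ∀ x, 0 ≤ ν x) :
    ContinuousOn (fun q : X → ℝ => Ldiv q ν) {q : X → ℝ | ∀ y, 0 ≤ q y} := by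
  intro a ha
  unfold Ldiv
  refine continuousWithinAt_sum_ereal Finset.univ _
    (fun x _ => ldiv_term_continuous ν x (hν x) ha) (fun x _ => ?_)
  by_cases hx : ν x = 0
  · simp [hx]
  by_cases hax : a x = 0
  · simp [hx, hax]
  · simp only [if_neg hx, if_neg hax]
    exact EReal.coe_ne_top _

lemma isClosed_pmfSet : IsClosed (pmfSet X) := by
  have h1 : IsClosed {q : X → ℝ | ∀ x, 0 ≤ q x} := by
    have he : {q : X → ℝ | ∀ x, 0 ≤ q x} = ⋂ x, {q : X → ℝ | 0 ≤ q x} := by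
      ext q; simp [Set.mem_iInter]
    rw [he]
    exact isClosed_iInter (fun x => isClosed_le continuous_const (continuous_apply x))
  have h2 : IsClosed {q : X → ℝ | ∑ x, q x = 1} :=
    isClosed_eq (continuous_finset_sum _ (fun x _ => continuous_apply x)) continuous_const
  exact h1.inter h2

lemma pmfSet_isCompact : IsCompact (pmfSet X) := by
  have h1 : IsCompact (Set.pi Set.univ (fun _ : X => Set.Icc (0 : ℝ) 1)) :=
    isCompact_univ_pi (fun _ => isCompact_Icc)
  refine h1.of_isClosed_subset isClosed_pmfSet ?_
  intro q hq
  rw [Set.mem_pi]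
  exact fun x _ => ⟨hq.1 x, pmf_le_one hq x⟩

lemma continuous_tv (p : X → ℝ) : Continuous (fun q : X → ℝ => tv q p) := by
  unfold tv
  exact continuous_const.mul
    (continuous_finset_sum _ (fun x _ => ((continuous_apply x).sub continuous_const).abs))

end CoLTAux

/-- Static Conditional Limit Theorem for Sources. -/
theorem static_CoLT_for_sources {X : Type*} [Fintype X] [Nonempty X]
    (n0 : ℕ) (hn0 : 1 ≤ n0) (ν : X → ℝ) (hν : ν ∈ Rn X n0)
    (Q : Set (X → ℝ)) (hQsub : Q ⊆ pmfSet X) (hQne : Q.Nonempty)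
    (hQconv : Convex ℝ Q) (hQclosed : IsClosed {r : ↥(pmfSet X) | ↑r ∈ Q})
    (hrare : ν ∉ Q)
    (qhat : X → ℝ) (hqhatQ : qhat ∈ Q)
    (hmax : ∀ q ∈ Q, Ldiv q ν ≤ Ldiv qhat ν)
    (huniq : ∀ q ∈ Q, Ldiv q ν = Ldiv qhat ν → q = qhat)
    (hfin : ⊥ < Ldiv qhat ν)
    (hrealize : Filter.Tendsto (fun k : ℕ => LSup (Q ∩ Rn X (k * n0)) ν)
      Filter.atTop (nhds (LSup Q ν))) :
    ∀ ε : ℝ, 0 < ε →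
      Filter.Tendsto
        (fun k : ℕ => post (k * n0) ν (tvBall qhat ε ∩ Q) / post (k * n0) ν Q)
        Filter.atTop (nhds 1) := by
  
  intro ε hε
  classical
  have hνpmf : ν ∈ pmfSet X := hν.1
  have hqhatpmf : qhat ∈ pmfSet X := hQsub hqhatQ
  -- a compact set capturing everything ε-far from qhat inside Q
  set K : Set (X → ℝ) := {q | q ∈ pmfSet X ∧ q ∈ Q ∧ ε ≤ tv q qhat} with hKdef
  have hKcompact : IsCompact K := by
    haveI : CompactSpace ↥(pmfSet X) := isCompact_iff_compactSpace.mp pmfSet_isCompact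
    have hclosed : IsClosed {r : ↥(pmfSet X) | ↑r ∈ Q ∧ ε ≤ tv ↑r qhat} := by
      refine IsClosed.inter hQclosed ?_
      exact isClosed_le continuous_const ((continuous_tv qhat).comp continuous_subtype_val)
    have hc2 : IsCompact {r : ↥(pmfSet X) | ↑r ∈ Q ∧ ε ≤ tv ↑r qhat} := hclosed.isCompact
    have himg := hc2.image continuous_subtype_val
    convert himg using 1
    ext q
    constructor
    · rintro ⟨hq1, hq2, hq3⟩
      exact ⟨⟨q, hq1⟩, ⟨hq2, hq3⟩, rfl⟩
    · rintro ⟨⟨r, hr⟩, ⟨h2, h3⟩, rfl⟩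
      exact ⟨hr, h2, h3⟩
  -- uniform gap below the maximum
  obtain ⟨M, hMlt, hMbound⟩ : ∃ M : EReal, M < Ldiv qhat ν ∧ ∀ q ∈ K, Ldiv q ν ≤ M := by
    rcases K.eq_empty_or_nonempty with hKe | hKne
    · exact ⟨⊥, hfin, by simp [hKe]⟩
    · have hcont : ContinuousOn (fun q => Ldiv q ν) K :=
        (ldiv_continuousOn ν hνpmf.1).mono (fun q hq => fun y => hq.1.1 y)
      obtain ⟨q0, hq0K, hq0max⟩ := hKcompact.exists_isMaxOn hKne hcont
      refine ⟨Ldiv q0 ν, ?_, fun q hq => hq0max hq⟩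
      have hne : q0 ≠ qhat := by
        intro h
        have h3 := hq0K.2.2
        rw [h] at h3
        have htv : tv qhat qhat = 0 := by simp [tv, sub_self]
        rw [htv] at h3
        exact absurd h3 (not_le.mpr hε)
      exact lt_of_le_of_ne (hmax q0 hq0K.2.1) (fun h => hne (huniq q0 hq0K.2.1 h))
  obtain ⟨b, hb1, hb2⟩ := EReal.exists_between_coe_real hMlt
  obtain ⟨c, hc1, hc2⟩ := EReal.exists_between_coe_real hb2
  have hbc : b < c := by exact_mod_cast hc1
  have ht : 0 < c - b := sub_pos.mpr hbc
  have hLSup : LSup Q ν = Ldiv qhat ν :=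
    le_antisymm (iSup₂_le hmax) (le_iSup₂ (f := fun q (_ : q ∈ Q) => Ldiv q ν) qhat hqhatQ)
  have hev1 : ∀ᶠ k in atTop, (c : EReal) < LSup (Q ∩ Rn X (k * n0)) ν := by
    rw [hLSup] at hrealize
    exact hrealize.eventually (eventually_gt_nhds hc2)
  have hfinQk : ∀ k : ℕ, (Q ∩ Rn X (k * n0)).Finite :=
    fun k => (Rn_finite _).subset Set.inter_subset_right
  have hfinAk : ∀ k : ℕ, ((tvBall qhat ε ∩ Q) ∩ Rn X (k * n0)).Finite :=
    fun k => (Rn_finite _).subset Set.inter_subset_right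
  have hfinEk : ∀ k : ℕ, ((Q \ tvBall qhat ε) ∩ Rn X (k * n0)).Finite :=
    fun k => (Rn_finite _).subset Set.inter_subset_right
  set m : ℕ := Fintype.card X with hm
  set w : ℕ → ℝ := fun k => (2 : ℝ) ^ m * (((k * n0 : ℕ) : ℝ) ^ m *
    Real.exp (-(c - b) * ((k * n0 : ℕ) : ℝ))) with hwdef
  -- key eventual bounds
  have key : ∀ᶠ k in atTop,
      1 - w k ≤ post (k * n0) ν (tvBall qhat ε ∩ Q) / post (k * n0) ν Q ∧
      post (k * n0) ν (tvBall qhat ε ∩ Q) / post (k * n0) ν Q ≤ 1 := by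
    filter_upwards [hev1, eventually_ge_atTop 1] with k hk1 hk2
    have hnk : 1 ≤ k * n0 := Nat.one_le_iff_ne_zero.mpr
      (Nat.mul_ne_zero (by omega) (by omega))
    set Ak : ℝ := ∑ q ∈ (hfinAk k).toFinset, typeProb (k * n0) ν q with hAk
    set Bk : ℝ := ∑ q ∈ (hfinQk k).toFinset, typeProb (k * n0) ν q with hBk
    set Ek : ℝ := ∑ q ∈ (hfinEk k).toFinset, typeProb (k * n0) ν q with hEk
    set Dk : ℝ := ∑ q ∈ (Rn_finite (X := X) (k * n0)).toFinset, typeProb (k * n0) ν q with hDk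
    have hsplit : Ak + Ek = Bk := by
      rw [hAk, hBk, hEk]
      have e1 : (hfinAk k).toFinset
          = (hfinQk k).toFinset.filter (fun q => q ∈ tvBall qhat ε) := by
        ext q
        simp only [Set.Finite.mem_toFinset, Finset.mem_filter, Set.mem_inter_iff, Set.mem_diff]
        tauto
      have e2 : (hfinEk k).toFinset
          = (hfinQk k).toFinset.filter (fun q => ¬ q ∈ tvBall qhat ε) := by
        ext q
        simp only [Set.Finite.mem_toFinset, Finset.mem_filter, Set.mem_inter_iff, Set.mem_diff]
        tauto
      rw [e1, e2]
      exact Finset.sum_filter_add_sum_filter_not _ _ _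
    obtain ⟨qk, hqkQ, hqkL⟩ : ∃ q, q ∈ Q ∩ Rn X (k * n0) ∧ (c : EReal) < Ldiv q ν := by
      rw [LSup, lt_iSup_iff] at hk1
      obtain ⟨q, hq⟩ := hk1
      rw [lt_iSup_iff] at hq
      obtain ⟨hqm, hql⟩ := hq
      exact ⟨q, hqm, hql⟩
    have hexpB : Real.exp (((k * n0 : ℕ) : ℝ) * c) ≤ Bk := by
      have h1 : Real.exp (((k * n0 : ℕ) : ℝ) * c) ≤ typeProb (k * n0) ν qk :=
        exp_le_typeProb (hQsub hqkQ.1) hνpmf hqkL.le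
      have h2 : typeProb (k * n0) ν qk ≤ Bk :=
        Finset.single_le_sum
          (fun q hq => typeProb_nonneg _ ((hQsub ((hfinQk k).mem_toFinset.mp hq).1).1))
          ((hfinQk k).mem_toFinset.mpr hqkQ)
      linarith
    have hBpos : 0 < Bk := lt_of_lt_of_le (Real.exp_pos _) hexpB
    have hEnonneg : 0 ≤ Ek := Finset.sum_nonneg
      (fun q hq => typeProb_nonneg _ ((hQsub ((hfinEk k).mem_toFinset.mp hq).1.1).1))
    have hEle : Ek ≤ ((k * n0 + 1 : ℕ) : ℝ) ^ m * Real.exp (((k * n0 : ℕ) : ℝ) * b) := by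
      have hterm : ∀ q ∈ (hfinEk k).toFinset,
          typeProb (k * n0) ν q ≤ Real.exp (((k * n0 : ℕ) : ℝ) * b) := by
        intro q hq
        rw [Set.Finite.mem_toFinset] at hq
        obtain ⟨⟨hqQ, hqnball⟩, hqRn⟩ := hq
        have hqpmf : q ∈ pmfSet X := hQsub hqQ
        have hqK : q ∈ K := by
          refine ⟨hqpmf, hqQ, ?_⟩
          by_contra hcon
          exact hqnball ⟨hqpmf, le_of_not_ge hcon⟩
        exact typeProb_le_exp hnk hqpmf hνpmf ((hMbound q hqK).trans hb1.le)
      calc Ek ≤ (hfinEk k).toFinset.card • Real.exp (((k * n0 : ℕ) : ℝ) * b) :=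
            Finset.sum_le_card_nsmul _ _ _ hterm
        _ = ((hfinEk k).toFinset.card : ℝ) * Real.exp (((k * n0 : ℕ) : ℝ) * b) := by
            rw [nsmul_eq_mul]
        _ ≤ ((k * n0 + 1 : ℕ) : ℝ) ^ m * Real.exp (((k * n0 : ℕ) : ℝ) * b) := by
            refine mul_le_mul_of_nonneg_right ?_ (Real.exp_pos _).le
            have hcard : (hfinEk k).toFinset.card ≤ (k * n0 + 1) ^ m := by
              refine le_trans (Finset.card_le_card ?_) (Rn_card_le (k * n0))
              intro q hq
              rw [Set.Finite.mem_toFinset] at hq ⊢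
              exact hq.2
            exact_mod_cast hcard
    have hDgeB : Bk ≤ Dk := by
      rw [hBk, hDk]
      refine Finset.sum_le_sum_of_subset_of_nonneg ?_ ?_
      · intro q hq
        rw [Set.Finite.mem_toFinset] at hq ⊢
        exact hq.2
      · intro q hq _
        exact typeProb_nonneg _ (((Rn_finite _).mem_toFinset.mp hq).1.1)
    have hDpos : 0 < Dk := lt_of_lt_of_le hBpos hDgeB
    have hAeq : Ak = Bk - Ek := by linarith
    have hratio : post (k * n0) ν (tvBall qhat ε ∩ Q) / post (k * n0) ν Q = 1 - Ek / Bk := by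
      simp only [post]
      rw [tsum_set_finite (hfinAk k), tsum_set_finite (hfinQk k),
        tsum_set_finite (Rn_finite _), ← hAk, ← hBk, ← hDk]
      have hstep : Ak / Dk / (Bk / Dk) = Ak / Bk := by
        field_simp
      rw [hstep, hAeq, sub_div, div_self (ne_of_gt hBpos)]
    constructor
    · rw [hratio]
      have hEB : Ek / Bk ≤ w k := by
        calc Ek / Bk
            ≤ (((k * n0 + 1 : ℕ) : ℝ) ^ m * Real.exp (((k * n0 : ℕ) : ℝ) * b)) /
              Real.exp (((k * n0 : ℕ) : ℝ) * c) := by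
              apply div_le_div₀ (by positivity) hEle (Real.exp_pos _) hexpB
          _ = ((k * n0 + 1 : ℕ) : ℝ) ^ m * Real.exp (-(c - b) * ((k * n0 : ℕ) : ℝ)) := by
              rw [mul_div_assoc, ← Real.exp_sub]
              have harg : ((k * n0 : ℕ) : ℝ) * b - ((k * n0 : ℕ) : ℝ) * c
                  = -(c - b) * ((k * n0 : ℕ) : ℝ) := by ring
              rw [harg]
          _ ≤ w k := by
              rw [hwdef]
              simp only []
              rw [← mul_assoc, ← mul_pow]
              refine mul_le_mul_of_nonneg_right ?_ (Real.exp_pos _).le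
              refine pow_le_pow_left₀ (by positivity) ?_ m
              have h1 : (1 : ℝ) ≤ ((k * n0 : ℕ) : ℝ) := by exact_mod_cast hnk
              push_cast at h1 ⊢
              linarith
      linarith
    · rw [hratio]
      have : 0 ≤ Ek / Bk := div_nonneg hEnonneg hBpos.le
      linarith
  -- the bounding sequence tends to 0
  have hN : Tendsto (fun k : ℕ => ((k * n0 : ℕ) : ℝ)) atTop atTop := by
    apply tendsto_natCast_atTop_atTop.comp
    apply tendsto_atTop_mono (fun k => Nat.le_mul_of_pos_right k (by omega : 0 < n0))
    exact tendsto_id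
  have hTN : Tendsto (fun k : ℕ => (c - b) * ((k * n0 : ℕ) : ℝ)) atTop atTop :=
    hN.const_mul_atTop ht
  have hg0 : Tendsto (fun k : ℕ => ((c - b) * ((k * n0 : ℕ) : ℝ)) ^ m *
      Real.exp (-((c - b) * ((k * n0 : ℕ) : ℝ)))) atTop (nhds 0) :=
    (Real.tendsto_pow_mul_exp_neg_atTop_nhds_zero m).comp hTN
  have hw0 : Tendsto w atTop (nhds 0) := by
    have h2 := hg0.const_mul ((2 : ℝ) ^ m / (c - b) ^ m)
    rw [mul_zero] at h2
    apply h2.congr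
    intro k
    rw [hwdef]
    simp only []
    rw [mul_pow]
    have hcb : (c - b) ^ m ≠ 0 := pow_ne_zero m ht.ne'
    field_simp
  have hlow : Tendsto (fun k => 1 - w k) atTop (nhds (1 : ℝ)) := by
    have := (tendsto_const_nhds (x := (1 : ℝ)) (f := atTop)).sub hw0
    simpa using this
  exact tendsto_of_tendsto_of_tendsto_of_le_of_le' hlow tendsto_const_nhds
    (key.mono fun k h => h.1) (key.mono fun k h => h.2)
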